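/- arXiv:1104.2566 — 3 statements merged into one kernel-verified Lean document; each statement's English description precedes it below -/
import Mathlib

section
/- The greedy DirectCut heuristic for 1D partitioning, which repeatedly assigns to each processor the smallest prefix interval of the remaining array whose load exceeds B = (sum_i A[i])/m, produces a partition (into at most m intervals) whose maximum interval load is at most (sum_i A[i])/m + max_i A[i]. -/
open Classical in
/-- Smallest end point `e` with `p < e ≤ n` such that the load of `[p, e)` is at
least `B`; returns `n` if no such point exists (take the rest of the array). -/
noncomputable def dcCut (A : ℕ → ℝ) (B : ℝ) (n p : ℕ) : ℕ :=
  if h : ∃ e, p < e ∧ e ≤ n ∧ B ≤ ∑ i ∈ Finset.Ico p e, A i then Nat.find h else n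

/-- Cut points produced by the greedy DirectCut heuristic. -/
noncomputable def dcCuts (A : ℕ → ℝ) (B : ℝ) (n : ℕ) : ℕ → ℕ
  | 0 => 0
  | j + 1 => dcCut A B n (dcCuts A B n j)

open Classical in
lemma dcCut_load_le (A : ℕ → ℝ) (hA : ∀ i, 0 ≤ A i) (B M : ℝ) (hB : 0 ≤ B)
    (hM0 : 0 ≤ M) (n p : ℕ) (hM : ∀ i < n, A i ≤ M) :
    ∑ i ∈ Finset.Ico p (dcCut A B n p), A i ≤ B + M := by
  unfold dcCut
  split
  · rename_i h
    set e := Nat.find h with he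
    obtain ⟨hpe, hen, _⟩ := Nat.find_spec h
    rcases eq_or_lt_of_le (Nat.succ_le_of_lt hpe) with h1 | h1
    · have hpn : p < n := by omega
      have hsing : Finset.Ico p e = {p} := by
        rw [show e = p + 1 by omega, Nat.Ico_succ_singleton]
      rw [hsing, Finset.sum_singleton]
      have := hM p hpn
      linarith
    · have hmin : ¬ (p < e - 1 ∧ e - 1 ≤ n ∧ B ≤ ∑ i ∈ Finset.Ico p (e-1), A i) :=
        Nat.find_min h (by omega)
      push_neg at hmin
      have hlt : ∑ i ∈ Finset.Ico p (e-1), A i < B := by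
        have := hmin (by omega) (by omega)
        linarith
      have hsplit : ∑ i ∈ Finset.Ico p e, A i
          = (∑ i ∈ Finset.Ico p (e-1), A i) + A (e-1) := by
        conv_lhs => rw [show e = (e-1) + 1 by omega]
        rw [Finset.sum_Ico_succ_top (by omega)]
      rw [hsplit]
      have : A (e-1) ≤ M := hM _ (by omega)
      linarith
  · rename_i h
    push_neg at h
    rcases le_or_gt n p with hp | hp
    · rw [Finset.Ico_eq_empty (by omega), Finset.sum_empty]
      linarith
    · have := h n hp le_rfl
      linarith

open Classical in
lemma dcCut_le (A : ℕ → ℝ) (B : ℝ) (n p : ℕ) : dcCut A B n p ≤ n := by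
  unfold dcCut
  split
  · rename_i h; exact (Nat.find_spec h).2.1
  · rfl

open Classical in
lemma dcCuts_rem (A : ℕ → ℝ) (hA : ∀ i, 0 ≤ A i) (B : ℝ) (hB : 0 ≤ B) (n m : ℕ)
    (htot : ∑ i ∈ Finset.range n, A i ≤ (m : ℝ) * B) :
    ∀ j ≤ m, ∑ i ∈ Finset.Ico (dcCuts A B n j) n, A i ≤ ((m - j : ℕ) : ℝ) * B := by
  intro j
  induction j with
  | zero =>
    intro _
    rw [show dcCuts A B n 0 = 0 from rfl, Nat.sub_zero, ← Finset.range_eq_Ico]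
    exact htot
  | succ j ih =>
    intro hjm
    have ihj := ih (by omega)
    show ∑ i ∈ Finset.Ico (dcCut A B n (dcCuts A B n j)) n, A i ≤ _
    set p := dcCuts A B n j with hp
    unfold dcCut
    split
    · rename_i h
      set e := Nat.find h with he
      obtain ⟨hpe, hen, hsum⟩ := Nat.find_spec h
      have hsplit : ∑ i ∈ Finset.Ico p n, A i
          = (∑ i ∈ Finset.Ico p e, A i) + ∑ i ∈ Finset.Ico e n, A i := by
        rw [Finset.sum_Ico_consecutive _ (le_of_lt hpe) hen]
      have : ((m - j : ℕ) : ℝ) = ((m - (j+1) : ℕ) : ℝ) + 1 := by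
        have : (m - j : ℕ) = (m - (j+1)) + 1 := by omega
        rw [this]; push_cast; ring
      rw [this] at ihj
      linarith [hsplit ▸ ihj]
    · simp only [Finset.Ico_self, Finset.sum_empty]
      positivity

/-- DirectCut with threshold `B = (∑ A)/m` (giving each of the `m`
processors the smallest prefix of the remaining array whose load reaches `B`,
the last processor taking the rest) yields intervals whose loads are all at most
`(∑ A)/m + max_i A i`. -/
theorem stmt_1 (n m : ℕ) (hn : 0 < n) (hm : 0 < m) (A : ℕ → ℝ) (hA : ∀ i, 0 ≤ A i)
    (B : ℝ) (hB : B = (∑ i ∈ Finset.range n, A i) / m)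
    (c : ℕ → ℕ) (hc : ∀ j, c j = if j < m then dcCuts A B n j else n) :
    ∀ j < m, (∑ i ∈ Finset.Ico (c j) (c (j + 1)), A i) ≤
      (∑ i ∈ Finset.range n, A i) / m +
        (Finset.range n).sup' (Finset.nonempty_range_iff.mpr hn.ne') A := by
  intro j hj
  set M := (Finset.range n).sup' (Finset.nonempty_range_iff.mpr hn.ne') A with hMdef
  have hM : ∀ i < n, A i ≤ M :=
    fun i hi => Finset.le_sup' A (Finset.mem_range.mpr hi)
  have hM0 : 0 ≤ M := le_trans (hA 0) (hM 0 hn)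
  have hBnn : 0 ≤ B := by
    rw [hB]
    exact div_nonneg (Finset.sum_nonneg fun i _ => hA i) (Nat.cast_nonneg m)
  have hcj : c j = dcCuts A B n j := by rw [hc j, if_pos hj]
  rw [← hB]
  rcases lt_or_eq_of_le (Nat.succ_le_of_lt hj) with h1 | h1
  · have : c (j+1) = dcCuts A B n (j+1) := by rw [hc (j+1), if_pos h1]
    rw [hcj, this]
    exact dcCut_load_le A hA B M hBnn hM0 n _ hM
  · have hc1 : c (j+1) = n := by rw [hc (j+1), if_neg (by omega)]
    have htot : ∑ i ∈ Finset.range n, A i ≤ (m : ℝ) * B := by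
      rw [hB, mul_div_cancel₀]
      exact_mod_cast hm.ne'
    have := dcCuts_rem A hA B hBnn n m htot j (by omega)
    rw [hcj, hc1]
    have : ((m - j : ℕ) : ℝ) = 1 := by
      have : m - j = 1 := by omega
      rw [this]; norm_num
    calc ∑ i ∈ Finset.Ico (dcCuts A B n j) n, A i ≤ ((m - j : ℕ) : ℝ) * B :=
          dcCuts_rem A hA B hBnn n m htot j (by omega)
      _ = B := by rw [this]; ring
      _ ≤ B + M := by linarith
end

section
/- If all entries of a one-dimensional array A of length n are strictly positive, then the optimal maximum load for partitioning A into m contiguous intervals satisfies L* ≤ (sum_i A[i]/m) · (1 + Δ·m/n), where Δ = (max_i A[i])/(min_i A[i]). -/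
/-!
Cut the array greedily: the `j`-th cut is the first index at which the prefix sum reaches
`j · S / m`, where `S` is the total load. Consecutive cuts then differ in prefix sum by at most
`S / m` plus one entry, so every interval load is at most `S / m + max A`. Finally
`max A = Δ · min A ≤ Δ · S / n`, because every one of the `n` entries is at least `min A`.
-/

/-- Optimal maximum interval load for partitioning the length-`n` prefix of the
array `f` into `k` contiguous (possibly empty) intervals. -/
noncomputable def opt1D (f : ℕ → ℝ) (n k : ℕ) : ℝ :=
  sInf {L | ∃ c : ℕ → ℕ, Monotone c ∧ c 0 = 0 ∧ c k = n ∧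
    L = ⨆ j : Fin k, ∑ i ∈ Finset.Ico (c j.1) (c (j.1 + 1)), f i}

open Finset

theorem opt1D_le_of_forall_sum_Ico_le {f : ℕ → ℝ} {n k : ℕ} (hk : 0 < k) {c : ℕ → ℕ}
    (hc : Monotone c) (hc0 : c 0 = 0) (hck : c k = n) {L : ℝ}
    (hL : ∀ j < k, ∑ i ∈ Ico (c j) (c (j + 1)), f i ≤ L) : opt1D f n k ≤ L := by
  have : Nonempty (Fin k) := ⟨⟨0, hk⟩⟩
  have hbdd : BddBelow {L | ∃ c : ℕ → ℕ, Monotone c ∧ c 0 = 0 ∧ c k = n ∧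
      L = ⨆ j : Fin k, ∑ i ∈ Ico (c j.1) (c (j.1 + 1)), f i} := by
    refine ⟨-∑ i ∈ range n, |f i|, ?_⟩
    rintro _ ⟨d, hd, hd0, hdk, rfl⟩
    have hsub : Ico (d 0) (d 1) ⊆ range n := fun i hi =>
      mem_range.2 <| (mem_Ico.1 hi).2.trans_le (hdk ▸ hd hk)
    calc -∑ i ∈ range n, |f i|
        ≤ -∑ i ∈ Ico (d 0) (d 1), |f i| :=
          neg_le_neg <| sum_le_sum_of_subset_of_nonneg hsub fun _ _ _ => abs_nonneg _
      _ ≤ ∑ i ∈ Ico (d 0) (d 1), f i := neg_le_of_abs_le (abs_sum_le_sum_abs _ _)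
      _ ≤ ⨆ j : Fin k, ∑ i ∈ Ico (d j.1) (d (j.1 + 1)), f i :=
          le_ciSup (f := fun j : Fin k => ∑ i ∈ Ico (d j.1) (d (j.1 + 1)), f i)
            (Set.finite_range _).bddAbove ⟨0, hk⟩
  exact (csInf_le hbdd ⟨c, hc, hc0, hck, rfl⟩).trans (ciSup_le fun j => hL j j.2)

section GreedyCut

open Classical

variable (f : ℕ → ℝ) (n m : ℕ)

-- The disjunct `t = n` makes the search total and puts every cut with `j ≥ m` at `n`.
noncomputable def greedyCut (j : ℕ) : ℕ :=
  Nat.find (⟨n, Or.inr rfl⟩ : ∃ t, (j < m ∧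
    j * (∑ i ∈ range n, f i) / m ≤ ∑ i ∈ range t, f i) ∨ t = n)

variable {f n m}

theorem greedyCut_le (j : ℕ) : greedyCut f n m j ≤ n :=
  Nat.find_min' _ (Or.inr rfl)

theorem greedyCut_zero (hm : 0 < m) : greedyCut f n m 0 = 0 :=
  Nat.find_eq_zero _ |>.2 <| Or.inl ⟨hm, by simp⟩

theorem greedyCut_spec (j : ℕ) :
    (j < m ∧ j * (∑ i ∈ range n, f i) / m ≤ ∑ i ∈ range (greedyCut f n m j), f i) ∨
      greedyCut f n m j = n :=
  Nat.find_spec (p := fun t =>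
    (j < m ∧ j * (∑ i ∈ range n, f i) / m ≤ ∑ i ∈ range t, f i) ∨ t = n) _

theorem greedyCut_self : greedyCut f n m m = n :=
  (greedyCut_spec m).resolve_left fun h => lt_irrefl m h.1

theorem greedyCut_monotone (hS : 0 ≤ ∑ i ∈ range n, f i) : Monotone (greedyCut f n m) :=
  fun _ _ hjj' => Nat.find_mono fun t => Or.imp_left fun ⟨hj'm, ht⟩ =>
    ⟨hjj'.trans_lt hj'm, le_trans (by gcongr) ht⟩

theorem le_sum_range_greedyCut (hS : 0 ≤ ∑ i ∈ range n, f i) {j : ℕ} (hj : j < m) :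
    j * (∑ i ∈ range n, f i) / m ≤ ∑ i ∈ range (greedyCut f n m j), f i := by
  rcases greedyCut_spec (f := f) j with ⟨-, h⟩ | h
  · exact h
  · rw [h, mul_div_right_comm]
    exact mul_le_of_le_one_left hS <|
      div_le_one_of_le₀ (by exact_mod_cast hj.le) (Nat.cast_nonneg m)

theorem sum_range_lt_of_lt_greedyCut {j t : ℕ} (hj : j < m) (ht : t < greedyCut f n m j) :
    ∑ i ∈ range t, f i < j * (∑ i ∈ range n, f i) / m := by
  have := Nat.find_min _ ht
  simp only [not_or, not_and, not_le] at this
  exact this.1 hj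

theorem sum_range_greedyCut_le (hm : 0 < m) {M : ℝ} (hM0 : 0 ≤ M) (hM : ∀ i < n, f i ≤ M)
    (hS : 0 ≤ ∑ i ∈ range n, f i) {j : ℕ} (hj : j ≤ m) :
    ∑ i ∈ range (greedyCut f n m j), f i ≤ j * (∑ i ∈ range n, f i) / m + M := by
  rcases hj.lt_or_eq with hj | rfl
  · cases hcut : greedyCut f n m j with
    | zero => simp only [range_zero, sum_empty]; positivity
    | succ t =>
      have hprefix := sum_range_lt_of_lt_greedyCut hj (hcut ▸ t.lt_add_one)
      have hle := greedyCut_le (f := f) (n := n) (m := m) j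
      rw [sum_range_succ]
      linarith [hM t (by omega)]
  · rw [greedyCut_self, mul_div_cancel_left₀ _ (by positivity)]
    linarith

theorem sum_Ico_greedyCut_le (hm : 0 < m) {M : ℝ} (hM0 : 0 ≤ M) (hM : ∀ i < n, f i ≤ M)
    (hS : 0 ≤ ∑ i ∈ range n, f i) {j : ℕ} (hj : j < m) :
    ∑ i ∈ Ico (greedyCut f n m j) (greedyCut f n m (j + 1)), f i ≤
      (∑ i ∈ range n, f i) / m + M := by
  rw [sum_Ico_eq_sub _ (greedyCut_monotone hS j.le_succ)]
  have hupper := sum_range_greedyCut_le hm hM0 hM hS hj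
  have hlower := le_sum_range_greedyCut hS hj
  push_cast at hupper
  have hstep : ((j : ℝ) + 1) * (∑ i ∈ range n, f i) / m =
      j * (∑ i ∈ range n, f i) / m + (∑ i ∈ range n, f i) / m := by ring
  linarith

theorem opt1D_le_sum_div_add (hm : 0 < m) {M : ℝ} (hM0 : 0 ≤ M) (hM : ∀ i < n, f i ≤ M)
    (hS : 0 ≤ ∑ i ∈ range n, f i) : opt1D f n m ≤ (∑ i ∈ range n, f i) / m + M :=
  opt1D_le_of_forall_sum_Ico_le hm (greedyCut_monotone hS) (greedyCut_zero hm) greedyCut_self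
    fun _ hj => sum_Ico_greedyCut_le hm hM0 hM hS hj

end GreedyCut

/-- if all entries of `A` (on its domain of length `n`) are strictly
positive, the optimal maximum load for partitioning into `m` contiguous intervals
is at most `((∑ A)/m) · (1 + Δ·m/n)` where `Δ = (max A)/(min A)`. -/
theorem stmt_2 (n m : ℕ) (hn : 0 < n) (hm : 0 < m) (A : ℕ → ℝ)
    (hA : ∀ i < n, 0 < A i) :
    opt1D A n m ≤ ((∑ i ∈ Finset.range n, A i) / m) *
      (1 + ((Finset.range n).sup' (Finset.nonempty_range_iff.mpr hn.ne') A /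
            (Finset.range n).inf' (Finset.nonempty_range_iff.mpr hn.ne') A) * m / n) := by
  set S := ∑ i ∈ range n, A i
  set Mx := (range n).sup' (nonempty_range_iff.mpr hn.ne') A
  set mn := (range n).inf' (nonempty_range_iff.mpr hn.ne') A
  have hmn_pos : 0 < mn := (lt_inf'_iff _).2 fun i hi => hA i (mem_range.1 hi)
  have hmx_nonneg : 0 ≤ Mx := (hA 0 hn).le.trans (le_sup' A (mem_range.2 hn))
  have hS : 0 ≤ S := sum_nonneg fun i hi => (hA i (mem_range.1 hi)).le
  have hmn_le : n * mn ≤ S := by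
    simpa using card_nsmul_le_sum (range n) A mn fun i hi => inf'_le A hi
  calc opt1D A n m ≤ S / m + Mx :=
        opt1D_le_sum_div_add hm hmx_nonneg (fun i hi => le_sup' A (mem_range.2 hi)) hS
    _ ≤ S / m * (1 + Mx / mn * m / n) := by
      rw [mul_add, mul_one, add_le_add_iff_left]
      calc Mx = Mx / mn * mn := (div_mul_cancel₀ _ hmn_pos.ne').symm
        _ ≤ Mx / mn * (S / n) := by
          gcongr
          rw [le_div_iff₀ (by exact_mod_cast hn)]
          linarith
        _ = S / m * (Mx / mn * m / n) := by field_simp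
end

section
/- m-way jagged dynamic programming recurrence: for a matrix A with n₁ rows and m processors, the optimal maximum load over all m-way jagged partitions (stripes of consecutive rows, each stripe split into column intervals) satisfies L*(n₁, m) = min over 1 ≤ k ≤ n₁ and 1 ≤ x ≤ m of max{ L*(k−1, m−x), OneD(k, n₁, x) }, where OneD(i,j,x) is the optimal maximum load of partitioning the column-projection of rows i..j into x intervals; base cases L*(0, p) = 0 for p ≥ 0, and L*(j, 0) = +∞ for j ≥ 1. -/
open scoped ENNReal

/-- Optimal maximum interval load (in `ℝ≥0∞`) for partitioning the length-`n`
prefix of the array `f` into `k` contiguous (possibly empty) intervals;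
`⊤` if no such partition exists. -/
noncomputable def opt1DE (f : ℕ → ℝ≥0∞) (n k : ℕ) : ℝ≥0∞ :=
  sInf {L | ∃ c : ℕ → ℕ, Monotone c ∧ c 0 = 0 ∧ c k = n ∧
    L = ⨆ j : Fin k, ∑ i ∈ Finset.Ico (c j.1) (c (j.1 + 1)), f i}

/-- Optimal cost, over all `p`-way jagged partitions of the first `j` rows of the
matrix `A` (with `n₂` columns), of the maximum rectangle load: the rows are cut
into nonempty stripes `[r t, r (t+1))`, stripe `t` gets `x t ≥ 1` processors with
`∑ x ≤ p`, and each stripe is partitioned optimally into `x t` column intervals.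
`⊤` if no such partition exists. -/
noncomputable def jaggedOpt (A : ℕ → ℕ → ℝ≥0∞) (n₂ j p : ℕ) : ℝ≥0∞ :=
  sInf {L | ∃ (P : ℕ) (r : ℕ → ℕ) (x : ℕ → ℕ),
    r 0 = 0 ∧ r P = j ∧ (∀ t < P, r t < r (t + 1)) ∧
    (∀ t < P, 1 ≤ x t) ∧ (∑ t ∈ Finset.range P, x t) ≤ p ∧
    L = ⨆ t : Fin P,
      opt1DE (fun y => ∑ i ∈ Finset.Ico (r t.1) (r (t.1 + 1)), A i y) n₂ (x t.1)}

/-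
The last stripe of a jagged partition of rows `[0, j)` is some `[k, j)` with `k < j`, served by
some `x ≥ 1` processors; removing it leaves a jagged partition of rows `[0, k)` with at most
`p - x` processors, and the cost is the maximum of the two costs. Conversely, appending such a
stripe to any partition of `[0, k)` gives a partition of `[0, j)`. Taking infima over both sides
gives the recurrence. The empty partition costs `0`, and a nonempty set of rows needs a stripe,
hence a processor.
-/

theorem Fin.iSup_eq_iSup_castSucc_sup_last {α : Type*} [CompleteLattice α] {P : ℕ}
    (f : Fin (P + 1) → α) : ⨆ t, f t = (⨆ t : Fin P, f t.castSucc) ⊔ f (Fin.last P) :=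
  le_antisymm
    (iSup_le <| Fin.lastCases le_sup_right fun t => le_sup_of_le_left (le_iSup_of_le t le_rfl))
    (sup_le (iSup_le fun t => le_iSup f t.castSucc) (le_iSup f _))

section JaggedRecurrence

variable (A : ℕ → ℕ → ℝ≥0∞) (n₂ : ℕ)

def jaggedCosts (j p : ℕ) : Set ℝ≥0∞ :=
  {L | ∃ (P : ℕ) (r : ℕ → ℕ) (x : ℕ → ℕ),
    r 0 = 0 ∧ r P = j ∧ (∀ t < P, r t < r (t + 1)) ∧
    (∀ t < P, 1 ≤ x t) ∧ (∑ t ∈ Finset.range P, x t) ≤ p ∧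
    L = ⨆ t : Fin P,
      opt1DE (fun y => ∑ i ∈ Finset.Ico (r t.1) (r (t.1 + 1)), A i y) n₂ (x t.1)}

theorem jaggedOpt_eq_sInf_jaggedCosts (j p : ℕ) :
    jaggedOpt A n₂ j p = sInf (jaggedCosts A n₂ j p) :=
  rfl

variable {A n₂}

theorem sup_mem_jaggedCosts {L : ℝ≥0∞} {k j p x : ℕ} (hL : L ∈ jaggedCosts A n₂ k (p - x))
    (hk : k < j) (hx : 1 ≤ x) (hxp : x ≤ p) :
    L ⊔ opt1DE (fun y => ∑ i ∈ Finset.Ico k j, A i y) n₂ x ∈ jaggedCosts A n₂ j p := by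
  obtain ⟨P, r, c, h0, hP, hr, hc, hsum, rfl⟩ := hL
  have hne : ∀ t < P, t ≠ P + 1 := fun t ht => by omega
  refine ⟨P + 1, Function.update r (P + 1) j, Function.update c P x, ?_, by simp, ?_, ?_, ?_, ?_⟩
  · simp [h0]
  · intro t ht
    rcases Nat.lt_succ_iff_lt_or_eq.1 ht with ht | rfl
    · simpa [hne t ht, ht.ne] using hr t ht
    · simpa [hP] using hk
  · intro t ht
    rcases Nat.lt_succ_iff_lt_or_eq.1 ht with ht | rfl
    · simpa [ht.ne] using hc t ht
    · simpa using hx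
  · rw [Finset.sum_range_succ, Function.update_self,
      Finset.sum_congr rfl fun t ht => Function.update_of_ne (Finset.mem_range.1 ht).ne _ _]
    omega
  · rw [Fin.iSup_eq_iSup_castSucc_sup_last]
    congr 1
    · refine iSup_congr fun t => ?_
      simp [hne t t.2, t.2.ne]
    · simp [hP]

theorem exists_sup_eq_of_mem_jaggedCosts {L : ℝ≥0∞} {j p : ℕ} (hj : 1 ≤ j)
    (hL : L ∈ jaggedCosts A n₂ j p) :
    ∃ k < j, ∃ x ∈ Finset.Icc 1 p, ∃ L' ∈ jaggedCosts A n₂ k (p - x),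
      L = L' ⊔ opt1DE (fun y => ∑ i ∈ Finset.Ico k j, A i y) n₂ x := by
  obtain ⟨_ | Q, r, c, h0, hP, hr, hc, hsum, rfl⟩ := hL
  · omega
  rw [Finset.sum_range_succ] at hsum
  refine ⟨r Q, hP ▸ hr Q Q.lt_succ_self, c Q, Finset.mem_Icc.2 ⟨hc Q Q.lt_succ_self, by omega⟩,
    _, ⟨Q, r, c, h0, rfl, fun t ht => hr t (ht.trans Q.lt_succ_self),
      fun t ht => hc t (ht.trans Q.lt_succ_self), by omega, rfl⟩, ?_⟩
  rw [Fin.iSup_eq_iSup_castSucc_sup_last]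
  simp [hP]

variable (A n₂)

theorem jaggedOpt_zero_rows (p : ℕ) : jaggedOpt A n₂ 0 p = 0 :=
  nonpos_iff_eq_zero.1 <|
    sInf_le ⟨0, fun _ => 0, fun _ => 0, rfl, rfl, by simp, by simp, by simp, by simp⟩

theorem jaggedOpt_zero_procs {j : ℕ} (hj : 1 ≤ j) : jaggedOpt A n₂ j 0 = ⊤ := by
  refine sInf_eq_top.2 fun L hL => ?_
  obtain ⟨k, -, x, hx, -⟩ := exists_sup_eq_of_mem_jaggedCosts hj hL
  exact absurd (Finset.mem_Icc.1 hx) (by omega)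

theorem jaggedOpt_le_max {k j p x : ℕ} (hk : k < j) (hx : 1 ≤ x) (hxp : x ≤ p) :
    jaggedOpt A n₂ j p ≤
      max (jaggedOpt A n₂ k (p - x)) (opt1DE (fun y => ∑ i ∈ Finset.Ico k j, A i y) n₂ x) := by
  rw [jaggedOpt_eq_sInf_jaggedCosts A n₂ k, sInf_sup_eq]
  exact le_iInf₂ fun L hL => sInf_le (sup_mem_jaggedCosts hL hk hx hxp)

theorem iInf_max_le_jaggedOpt {j p : ℕ} (hj : 1 ≤ j) :
    ⨅ k ∈ Finset.range j, ⨅ x ∈ Finset.Icc 1 p,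
      max (jaggedOpt A n₂ k (p - x)) (opt1DE (fun y => ∑ i ∈ Finset.Ico k j, A i y) n₂ x) ≤
    jaggedOpt A n₂ j p := by
  refine le_sInf fun L hL => ?_
  obtain ⟨k, hk, x, hx, L', hL', rfl⟩ := exists_sup_eq_of_mem_jaggedCosts hj hL
  exact iInf₂_le_of_le k (Finset.mem_range.2 hk) <| iInf₂_le_of_le x hx <|
    sup_le_sup_right (sInf_le hL') _

end JaggedRecurrence

theorem stmt_14_general (n₁ n₂ m : ℕ) (hn₁ : 1 ≤ n₁)
    (A : ℕ → ℕ → ℝ≥0∞) :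
    jaggedOpt A n₂ n₁ m =
      (⨅ k ∈ Finset.range n₁, ⨅ x ∈ Finset.Icc 1 m,
        max (jaggedOpt A n₂ k (m - x))
          (opt1DE (fun y => ∑ i ∈ Finset.Ico k n₁, A i y) n₂ x)) ∧
    (∀ p, jaggedOpt A n₂ 0 p = 0) ∧
    (∀ j, 1 ≤ j → jaggedOpt A n₂ j 0 = ⊤) := by
  refine ⟨le_antisymm ?_ (iInf_max_le_jaggedOpt A n₂ hn₁), jaggedOpt_zero_rows A n₂,
    fun j => jaggedOpt_zero_procs A n₂⟩
  refine le_iInf₂ fun k hk => le_iInf₂ fun x hx => ?_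
  obtain ⟨hx, hxm⟩ := Finset.mem_Icc.1 hx
  exact jaggedOpt_le_max A n₂ (Finset.mem_range.1 hk) hx hxm

/-- dynamic programming recurrence for optimal `m`-way jagged
partitions: `L*(n₁, m) = min_{0 ≤ k < n₁, 1 ≤ x ≤ m} max (L*(k, m−x)) (OneD k n₁ x)`
where `OneD k n₁ x` is the optimal 1D partition of the column projection of rows
`[k, n₁)` into `x` intervals; base cases `L*(0, p) = 0` and `L*(j, 0) = ⊤` for
`j ≥ 1`. -/
theorem stmt_14 (n₁ n₂ m : ℕ) (hn₁ : 1 ≤ n₁) (hm : 1 ≤ m)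
    (A : ℕ → ℕ → ℝ≥0∞) :
    jaggedOpt A n₂ n₁ m =
      (⨅ k ∈ Finset.range n₁, ⨅ x ∈ Finset.Icc 1 m,
        max (jaggedOpt A n₂ k (m - x))
          (opt1DE (fun y => ∑ i ∈ Finset.Ico k n₁, A i y) n₂ x)) ∧
    (∀ p, jaggedOpt A n₂ 0 p = 0) ∧
    (∀ j, 1 ≤ j → jaggedOpt A n₂ j 0 = ⊤) :=
  stmt_14_general n₁ n₂ m hn₁ A
end
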